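/- For any f ∈ F_q[t] with deg f ≥ 1, there exists a positive integer n ≤ 1 + deg f such that the n-th iterate S^{(n)}(f) is a fixed point of S (i.e. S(S^{(n)}(f)) = S^{(n)}(f)). -/

import Mathlib

open Polynomial

variable {F : Type*} [Field F] [Fintype F] [DecidableEq F]

/-- `delta a f` is the natural number attached to the polynomial `f` via the
enumeration `a : Fin q ≃ F` of the field (`q = Fintype.card F`): if
`f = a_{i_0} + a_{i_1} t + ⋯ + a_{i_n} t^n` then `delta a f = i_0 + i_1 q + ⋯ + i_n q^n`.
In particular `delta a 0 = 0` whenever `a 0 = 0`. -/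
noncomputable def delta (a : Fin (Fintype.card F) ≃ F) (f : F[X]) : ℕ :=
  ∑ j ∈ Finset.range (f.natDegree + 1), (a.symm (f.coeff j) : ℕ) * Fintype.card F ^ j

/-- The inverse of `delta`: the polynomial whose `j`-th coefficient is the `j`-th
base-`q` digit of `m` (under the enumeration `a`). -/
noncomputable def deltaInv (a : Fin (Fintype.card F) ≃ F) (m : ℕ) : F[X] :=
  ∑ j ∈ Finset.range (m + 1),
    C (a ⟨m / Fintype.card F ^ j % Fintype.card F, Nat.mod_lt _ Fintype.card_pos⟩) * X ^ j

/-- The factorial of a polynomial: `f! = ∏_{g < f} (f - g)`, the product over all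
polynomials `g` with `delta a g < delta a f`; in particular `0! = 1`. -/
noncomputable def pfact (a : Fin (Fintype.card F) ≃ F) (f : F[X]) : F[X] :=
  ∏ m ∈ Finset.range (delta a f), (f - deltaInv a m)

/-- The Smarandache function: `S a 0 = 0`, and for `f ≠ 0`, `S a f` is the smallest
polynomial `g` (in the order given by `delta`) such that `f ∣ g!`. -/
noncomputable def S (a : Fin (Fintype.card F) ≃ F) (f : F[X]) : F[X] :=
  if f = 0 then 0 else deltaInv a (sInf {m : ℕ | f ∣ pfact a (deltaInv a m)})

section Basic

variable (a : Fin (Fintype.card F) ≃ F) (h0 : a 0 = 0) (h1 : a 1 = 1)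

lemma two_le_q : 2 ≤ Fintype.card F := Fintype.one_lt_card

omit [DecidableEq F] in
lemma fin_mk_zero (h : 0 < Fintype.card F) : (⟨0, h⟩ : Fin (Fintype.card F)) = 0 := by
  ext; simp

lemma lt_q_pow_self (m : ℕ) : m < Fintype.card F ^ (m + 1) :=
  lt_of_lt_of_le Nat.lt_two_pow_self (Nat.pow_le_pow_left (two_le_q (F := F)) _ |>.trans
    (Nat.pow_le_pow_right (by have := two_le_q (F := F); omega) (by omega)))

include h0 in
lemma coeff_deltaInv (m j : ℕ) :
    (deltaInv a m).coeff j = a ⟨m / Fintype.card F ^ j % Fintype.card F,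
      Nat.mod_lt _ Fintype.card_pos⟩ := by
  rw [deltaInv, finset_sum_coeff]
  simp only [coeff_C_mul, coeff_X_pow, mul_ite, mul_one, mul_zero]
  rw [Finset.sum_ite_eq (Finset.range (m+1)) j]
  rcases le_or_gt j m with hj | hj
  · simp [Nat.lt_succ_of_le hj]
  · have hmq : m / Fintype.card F ^ j = 0 := by
      apply Nat.div_eq_of_lt
      calc m < j := hj
      _ < 2 ^ j := Nat.lt_two_pow_self
      _ ≤ Fintype.card F ^ j := Nat.pow_le_pow_left (two_le_q (F := F)) _
    simp [Nat.lt_succ, not_le.mpr hj, hmq, fin_mk_zero, h0]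

include h0 in
lemma coeff_deltaInv_eq_zero {m j : ℕ} (h : m < Fintype.card F ^ j) :
    (deltaInv a m).coeff j = 0 := by
  rw [coeff_deltaInv a h0, Nat.div_eq_of_lt h]
  simpa using h0

include h0 in
lemma degree_deltaInv_lt {m k : ℕ} (h : m < Fintype.card F ^ k) :
    (deltaInv a m).degree < (k : WithBot ℕ) := by
  rw [degree_lt_iff_coeff_zero]
  intro j hj
  exact_mod_cast coeff_deltaInv_eq_zero a h0
    (lt_of_lt_of_le h (Nat.pow_le_pow_right Fintype.card_pos (by exact_mod_cast hj)))

include h0 in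
lemma natDegree_deltaInv_lt {m k : ℕ} (hk : 1 ≤ k) (h : m < Fintype.card F ^ k) :
    (deltaInv a m).natDegree < k := by
  rcases eq_or_ne (deltaInv a m) 0 with h' | h'
  · simp only [h', natDegree_zero]; omega
  · exact natDegree_lt_iff_degree_lt h' |>.mpr (by exact_mod_cast degree_deltaInv_lt a h0 h)

include h0 in
lemma deltaInv_zero : deltaInv a 0 = 0 := by
  ext j
  simpa using coeff_deltaInv_eq_zero a h0 (j := j) (by positivity)

end Basic
section NatDigits

lemma digit_sum_lt {q : ℕ} (hq : 1 ≤ q) (c : ℕ → ℕ) (hc : ∀ i, c i < q) (n : ℕ) :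
    (∑ i ∈ Finset.range n, c i * q ^ i) < q ^ n := by
  induction n with
  | zero => simp
  | succ n ih =>
    rw [Finset.sum_range_succ, pow_succ]
    have h2 : c n * q ^ n + q ^ n ≤ q ^ n * q := by
      calc c n * q ^ n + q ^ n = (c n + 1) * q ^ n := by ring
      _ ≤ q * q ^ n := Nat.mul_le_mul_right _ (hc n)
      _ = q ^ n * q := mul_comm _ _
    omega

lemma digit_sum_div_mod {q : ℕ} (hq : 2 ≤ q) (c : ℕ → ℕ) (hc : ∀ i, c i < q) (n j : ℕ) :
    (∑ i ∈ Finset.range n, c i * q ^ i) / q ^ j % q = if j < n then c j else 0 := by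
  have hq0 : 0 < q := by omega
  induction n with
  | zero => simp
  | succ n ih =>
    rw [Finset.sum_range_succ]
    rcases lt_trichotomy j n with hj | hj | hj
    · have hpow : c n * q ^ n = (c n * q ^ (n - j - 1) * q) * q ^ j := by
        rw [mul_assoc, mul_assoc, ← pow_succ', ← pow_add]
        congr 2
        omega
      rw [hpow, Nat.add_mul_div_right _ _ (pow_pos hq0 j), Nat.add_mul_mod_self_right, ih]
      simp [hj, Nat.lt_succ_of_lt hj]
    · subst hj
      have hlt : (∑ i ∈ Finset.range j, c i * q ^ i) < q ^ j :=
        digit_sum_lt (by omega) c hc j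
      rw [Nat.add_mul_div_right _ _ (pow_pos hq0 j), Nat.div_eq_of_lt hlt]
      simp [Nat.mod_eq_of_lt (hc j)]
    · have hlt : (∑ i ∈ Finset.range (n+1), c i * q ^ i) < q ^ j := by
        calc (∑ i ∈ Finset.range (n+1), c i * q ^ i) < q ^ (n+1) :=
              digit_sum_lt (by omega) c hc (n+1)
        _ ≤ q ^ j := Nat.pow_le_pow_right hq0 (by omega)
      rw [← Finset.sum_range_succ, Nat.div_eq_of_lt hlt]
      rw [if_neg (by omega : ¬ j < n + 1)]
      exact Nat.zero_mod q

lemma digit_sum_self {q : ℕ} (hq : 2 ≤ q) (m n : ℕ) :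
    (∑ i ∈ Finset.range n, m / q ^ i % q * q ^ i) = m % q ^ n := by
  induction n with
  | zero => simp [Nat.mod_one]
  | succ n ih =>
    rw [Finset.sum_range_succ, ih, Nat.mod_pow_succ]
    ring

end NatDigits
section DeltaBij

variable (a : Fin (Fintype.card F) ≃ F) (h0 : a 0 = 0) (h1 : a 1 = 1)

omit [DecidableEq F] in
lemma a_mk_congr (a : Fin (Fintype.card F) ≃ F) {x y : ℕ} (h : x = y) (hx : x < Fintype.card F) :
    a ⟨x, hx⟩ = a ⟨y, h ▸ hx⟩ := by subst h; rfl

omit [DecidableEq F] in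
lemma fin_mk_one (h : 1 < Fintype.card F) : (⟨1, h⟩ : Fin (Fintype.card F)) = 1 := by
  ext
  simp [Fin.val_one', Nat.mod_eq_of_lt h]

lemma delta_lt_pow (f : F[X]) : delta a f < Fintype.card F ^ (f.natDegree + 1) :=
  digit_sum_lt Fintype.card_pos _ (fun j => (a.symm (f.coeff j)).isLt) _

include h0 in
lemma coeff_deltaInv_log_ne_zero {m : ℕ} (hm : m ≠ 0) :
    (deltaInv a m).coeff (Nat.log (Fintype.card F) m) ≠ 0 := by
  have hq := two_le_q (F := F)
  rw [coeff_deltaInv a h0]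
  set L := Nat.log (Fintype.card F) m
  have h1' : 1 ≤ m / Fintype.card F ^ L :=
    (Nat.one_le_div_iff (pow_pos Fintype.card_pos L)).mpr (Nat.pow_log_le_self _ hm)
  have h2 : m / Fintype.card F ^ L < Fintype.card F := by
    rw [Nat.div_lt_iff_lt_mul (pow_pos Fintype.card_pos L)]
    calc m < Fintype.card F ^ (L + 1) := Nat.lt_pow_succ_log_self (by omega) m
    _ = Fintype.card F * Fintype.card F ^ L := by ring
  intro hcon
  apply_fun a.symm at hcon
  rw [Equiv.symm_apply_apply, ← h0, Equiv.symm_apply_apply] at hcon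
  have hval := congrArg Fin.val hcon
  simp only [Fin.val_zero] at hval
  rw [Nat.mod_eq_of_lt h2] at hval
  omega

include h0 in
lemma natDegree_deltaInv_le_log (m : ℕ) :
    (deltaInv a m).natDegree ≤ Nat.log (Fintype.card F) m := by
  have hq := two_le_q (F := F)
  have := natDegree_deltaInv_lt a h0 (k := Nat.log (Fintype.card F) m + 1)
    (by omega) (Nat.lt_pow_succ_log_self (by omega) m)
  omega

include h0 in
lemma pow_natDegree_deltaInv_le {m : ℕ} (hm : m ≠ 0) :
    Fintype.card F ^ (deltaInv a m).natDegree ≤ m :=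
  calc Fintype.card F ^ (deltaInv a m).natDegree
      ≤ Fintype.card F ^ Nat.log (Fintype.card F) m :=
        Nat.pow_le_pow_right Fintype.card_pos (natDegree_deltaInv_le_log a h0 m)
  _ ≤ m := Nat.pow_log_le_self _ hm

include h0 in
lemma delta_deltaInv (m : ℕ) : delta a (deltaInv a m) = m := by
  have hq := two_le_q (F := F)
  rw [delta]
  have hc : ∀ j ∈ Finset.range ((deltaInv a m).natDegree + 1),
      (a.symm ((deltaInv a m).coeff j) : ℕ) * Fintype.card F ^ j
        = m / Fintype.card F ^ j % Fintype.card F * Fintype.card F ^ j := by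
    intro j _
    rw [coeff_deltaInv a h0, Equiv.symm_apply_apply]
  rw [Finset.sum_congr rfl hc, digit_sum_self hq]
  rcases eq_or_ne m 0 with rfl | hm
  · simp
  · apply Nat.mod_eq_of_lt
    calc m < Fintype.card F ^ (Nat.log (Fintype.card F) m + 1) :=
          Nat.lt_pow_succ_log_self (by omega) m
    _ ≤ Fintype.card F ^ ((deltaInv a m).natDegree + 1) := by
        apply Nat.pow_le_pow_right Fintype.card_pos
        have := le_natDegree_of_ne_zero (coeff_deltaInv_log_ne_zero a h0 hm)
        omega

include h0 in
lemma deltaInv_injective : Function.Injective (deltaInv a) :=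
  Function.LeftInverse.injective (g := delta a) (delta_deltaInv a h0)

include h0 in
lemma deltaInv_ne_zero {m : ℕ} (hm : m ≠ 0) : deltaInv a m ≠ 0 := by
  intro hcon
  exact hm (by rw [← delta_deltaInv a h0 m, hcon, ← deltaInv_zero a h0,
    delta_deltaInv a h0])

include h0 in
lemma deltaInv_delta (f : F[X]) : deltaInv a (delta a f) = f := by
  have hq := two_le_q (F := F)
  ext j
  rw [coeff_deltaInv a h0]
  have hd : delta a f / Fintype.card F ^ j % Fintype.card F
      = if j < f.natDegree + 1 then (a.symm (f.coeff j) : ℕ) else 0 := by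
    rw [delta]
    exact digit_sum_div_mod hq _ (fun i => (a.symm (f.coeff i)).isLt) _ _
  rw [a_mk_congr a hd]
  rcases lt_or_ge j (f.natDegree + 1) with hj | hj
  · rw [a_mk_congr a (if_pos hj)]
    have : (⟨(a.symm (f.coeff j) : ℕ), (a.symm (f.coeff j)).isLt⟩ : Fin (Fintype.card F))
        = a.symm (f.coeff j) := by
      ext; simp
    rw [this, Equiv.apply_symm_apply]
  · rw [a_mk_congr a (if_neg (by omega)), fin_mk_zero Fintype.card_pos, h0]
    exact (coeff_eq_zero_of_natDegree_lt (by omega)).symm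

include h0 in
lemma delta_eq_zero_iff {f : F[X]} : delta a f = 0 ↔ f = 0 := by
  constructor
  · intro h
    rw [← deltaInv_delta a h0 f, h, deltaInv_zero a h0]
  · rintro rfl
    rw [← deltaInv_zero a h0, delta_deltaInv a h0]

include h0 h1 in
lemma deltaInv_q_pow (D : ℕ) : deltaInv a (Fintype.card F ^ D) = X ^ D := by
  have hq := two_le_q (F := F)
  ext j
  rw [coeff_deltaInv a h0, coeff_X_pow]
  rcases lt_trichotomy j D with hj | hj | hj
  · have hd : Fintype.card F ^ D / Fintype.card F ^ j % Fintype.card F = 0 := by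
      rw [Nat.pow_div (by omega) (by omega),
        show D - j = (D - j - 1) + 1 by omega, pow_succ]
      exact Nat.mul_mod_left _ _
    rw [a_mk_congr a hd, fin_mk_zero Fintype.card_pos, h0, if_neg (by omega)]
  · subst hj
    have hd : Fintype.card F ^ j / Fintype.card F ^ j % Fintype.card F = 1 := by
      rw [Nat.div_self (pow_pos Fintype.card_pos j)]
      exact Nat.mod_eq_of_lt (by omega)
    rw [a_mk_congr a hd, fin_mk_one (by omega), h1, if_pos rfl]
  · have hd : Fintype.card F ^ D / Fintype.card F ^ j % Fintype.card F = 0 := by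
      rw [Nat.div_eq_of_lt (Nat.pow_lt_pow_right (by omega) hj)]
      exact Nat.zero_mod _
    rw [a_mk_congr a hd, fin_mk_zero Fintype.card_pos, h0, if_neg (by omega)]

include h0 h1 in
lemma delta_X_pow (D : ℕ) : delta a (X ^ D : F[X]) = Fintype.card F ^ D := by
  rw [← deltaInv_q_pow a h0 h1 D, delta_deltaInv a h0]

end DeltaBij
section Counting

open scoped Classical

variable (a : Fin (Fintype.card F) ≃ F) (h0 : a 0 = 0)

include h0 in
lemma deltaInv_block {k r : ℕ} (c : ℕ) (hr : r < Fintype.card F ^ k) :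
    deltaInv a (c * Fintype.card F ^ k + r)
      = deltaInv a (c * Fintype.card F ^ k) + deltaInv a r := by
  have hq := two_le_q (F := F)
  ext j
  rw [coeff_add, coeff_deltaInv a h0, coeff_deltaInv a h0, coeff_deltaInv a h0]
  rcases lt_or_ge j k with hj | hj
  · obtain ⟨s, rfl⟩ : ∃ s, k = j + s + 1 := ⟨k - j - 1, by omega⟩
    have e1 : (c * Fintype.card F ^ (j + s + 1) + r) / Fintype.card F ^ j % Fintype.card F
        = r / Fintype.card F ^ j % Fintype.card F := by
      rw [show c * Fintype.card F ^ (j + s + 1) + r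
          = r + (c * Fintype.card F ^ s * Fintype.card F) * Fintype.card F ^ j by ring,
        Nat.add_mul_div_right _ _ (pow_pos Fintype.card_pos j),
        Nat.add_mul_mod_self_right]
    have e2 : (c * Fintype.card F ^ (j + s + 1)) / Fintype.card F ^ j % Fintype.card F
        = 0 := by
      rw [show c * Fintype.card F ^ (j + s + 1)
          = (c * Fintype.card F ^ s * Fintype.card F) * Fintype.card F ^ j by ring,
        Nat.mul_div_cancel _ (pow_pos Fintype.card_pos j), Nat.mul_mod_left]
    rw [a_mk_congr a e1, a_mk_congr a e2, fin_mk_zero Fintype.card_pos, h0, zero_add]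
  · obtain ⟨s, rfl⟩ : ∃ s, j = k + s := ⟨j - k, by omega⟩
    have e3 : r / Fintype.card F ^ (k + s) % Fintype.card F = 0 := by
      rw [Nat.div_eq_of_lt (lt_of_lt_of_le hr (Nat.pow_le_pow_right Fintype.card_pos
        (by omega)))]
      exact Nat.zero_mod _
    have e1 : (c * Fintype.card F ^ k + r) / Fintype.card F ^ (k + s) % Fintype.card F
        = c * Fintype.card F ^ k / Fintype.card F ^ (k + s) % Fintype.card F := by
      have einner : (c * Fintype.card F ^ k + r) / Fintype.card F ^ k
          = c * Fintype.card F ^ k / Fintype.card F ^ k := by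
        rw [show c * Fintype.card F ^ k + r = r + c * Fintype.card F ^ k by ring,
          Nat.add_mul_div_right _ _ (pow_pos Fintype.card_pos k),
          Nat.div_eq_of_lt hr, zero_add,
          Nat.mul_div_cancel _ (pow_pos Fintype.card_pos k)]
      rw [pow_add, ← Nat.div_div_eq_div_mul, ← Nat.div_div_eq_div_mul, einner]
    rw [a_mk_congr a e1, a_mk_congr a e3,
      fin_mk_zero Fintype.card_pos, h0, add_zero]

include h0 in
lemma block_exists_unique {Q : F[X]} (hQ : Q.Monic) (hk : 1 ≤ Q.natDegree)
    (h : F[X]) (c : ℕ) :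
    ∃! m, m ∈ Finset.Ico (c * Fintype.card F ^ Q.natDegree)
        ((c + 1) * Fintype.card F ^ Q.natDegree) ∧ Q ∣ h - deltaInv a m := by
  have hq := two_le_q (F := F)
  have hQ0 : Q ≠ 0 := hQ.ne_zero
  have hdegQ : Q.degree = (Q.natDegree : WithBot ℕ) := degree_eq_natDegree hQ0
  have hvdeg : ((h - deltaInv a (c * Fintype.card F ^ Q.natDegree)) %ₘ Q).degree
      < (Q.natDegree : WithBot ℕ) := hdegQ ▸ degree_modByMonic_lt _ hQ
  set v := (h - deltaInv a (c * Fintype.card F ^ Q.natDegree)) %ₘ Q with hv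
  have hvlt : delta a v < Fintype.card F ^ Q.natDegree := by
    rcases eq_or_ne v 0 with hv0 | hv0
    · rw [hv0, (delta_eq_zero_iff a h0).mpr rfl]
      positivity
    · calc delta a v < Fintype.card F ^ (v.natDegree + 1) := delta_lt_pow a v
      _ ≤ Fintype.card F ^ Q.natDegree := Nat.pow_le_pow_right (by omega)
          (by have := (natDegree_lt_iff_degree_lt hv0).mpr hvdeg; omega)
  have hkey : Q ∣ h - deltaInv a (c * Fintype.card F ^ Q.natDegree + delta a v) := by
    rw [deltaInv_block a h0 c hvlt, deltaInv_delta a h0]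
    have : h - (deltaInv a (c * Fintype.card F ^ Q.natDegree) + v)
        = (h - deltaInv a (c * Fintype.card F ^ Q.natDegree)) - v := by ring
    rw [this, hv, modByMonic_eq_sub_mul_div _ Q]
    exact ⟨(h - deltaInv a (c * Fintype.card F ^ Q.natDegree)) /ₘ Q, by ring⟩
  refine ⟨c * Fintype.card F ^ Q.natDegree + delta a v, ⟨?_, hkey⟩, ?_⟩
  · rw [Finset.mem_Ico]
    have : (c + 1) * Fintype.card F ^ Q.natDegree
        = c * Fintype.card F ^ Q.natDegree + Fintype.card F ^ Q.natDegree := by ring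
    omega
  · rintro m ⟨hm, hdvd⟩
    rw [Finset.mem_Ico] at hm
    obtain ⟨r, hr, rfl⟩ : ∃ r, r < Fintype.card F ^ Q.natDegree
        ∧ m = c * Fintype.card F ^ Q.natDegree + r := by
      refine ⟨m - c * Fintype.card F ^ Q.natDegree, ?_, by omega⟩
      have : (c + 1) * Fintype.card F ^ Q.natDegree
          = c * Fintype.card F ^ Q.natDegree + Fintype.card F ^ Q.natDegree := by ring
      omega
    have hdiff : Q ∣ deltaInv a (c * Fintype.card F ^ Q.natDegree + delta a v)
        - deltaInv a (c * Fintype.card F ^ Q.natDegree + r) := by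
      have := dvd_sub hdvd hkey
      have heq : h - deltaInv a (c * Fintype.card F ^ Q.natDegree + r)
            - (h - deltaInv a (c * Fintype.card F ^ Q.natDegree + delta a v))
          = deltaInv a (c * Fintype.card F ^ Q.natDegree + delta a v)
            - deltaInv a (c * Fintype.card F ^ Q.natDegree + r) := by ring
      rwa [heq] at this
    rw [deltaInv_block a h0 c hvlt, deltaInv_block a h0 c hr] at hdiff
    have hdiff2 : Q ∣ deltaInv a (delta a v) - deltaInv a r := by
      have heq : deltaInv a (c * Fintype.card F ^ Q.natDegree) + deltaInv a (delta a v)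
            - (deltaInv a (c * Fintype.card F ^ Q.natDegree) + deltaInv a r)
          = deltaInv a (delta a v) - deltaInv a r := by ring
      rwa [heq] at hdiff
    have heqp : deltaInv a r = deltaInv a (delta a v) := by
      by_contra hne
      have hsub0 : deltaInv a (delta a v) - deltaInv a r ≠ 0 :=
        sub_ne_zero.mpr (fun h' => hne h'.symm)
      have hd1 : (deltaInv a (delta a v)).degree < (Q.natDegree : WithBot ℕ) :=
        degree_deltaInv_lt a h0 hvlt
      have hd2 : (deltaInv a r).degree < (Q.natDegree : WithBot ℕ) :=
        degree_deltaInv_lt a h0 hr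
      have hlt : (deltaInv a (delta a v) - deltaInv a r).degree < (Q.natDegree : WithBot ℕ) :=
        lt_of_le_of_lt (degree_sub_le _ _) (max_lt hd1 hd2)
      have hge := degree_le_of_dvd hdiff2 hsub0
      rw [hdegQ] at hge
      exact absurd (lt_of_le_of_lt hge hlt) (lt_irrefl _)
    have := deltaInv_injective a h0 heqp
    omega

include h0 in
lemma count_blocks {Q : F[X]} (hQ : Q.Monic) (hk : 1 ≤ Q.natDegree)
    (h : F[X]) (c : ℕ) :
    ((Finset.range (c * Fintype.card F ^ Q.natDegree)).filter
      fun m => Q ∣ h - deltaInv a m).card = c := by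
  induction c with
  | zero => simp
  | succ c ih =>
    have hsplit : Finset.range ((c + 1) * Fintype.card F ^ Q.natDegree)
        = Finset.range (c * Fintype.card F ^ Q.natDegree)
          ∪ Finset.Ico (c * Fintype.card F ^ Q.natDegree)
            ((c + 1) * Fintype.card F ^ Q.natDegree) := by
      rw [Finset.range_eq_Ico, Finset.range_eq_Ico, Finset.Ico_union_Ico_eq_Ico (Nat.zero_le _)
        (Nat.mul_le_mul_right _ (by omega))]
    rw [hsplit, Finset.filter_union, Finset.card_union_of_disjoint, ih]
    · congr 1
      obtain ⟨m₀, hm₀, huniq⟩ := block_exists_unique a h0 hQ hk h c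
      rw [Finset.card_eq_one]
      refine ⟨m₀, ?_⟩
      ext m
      simp only [Finset.mem_filter, Finset.mem_singleton]
      exact ⟨fun hm => huniq m hm, fun hm => hm ▸ hm₀⟩
    · exact Finset.disjoint_filter_filter (Finset.disjoint_left.mpr
        (fun m hm hm2 => by
          rw [Finset.mem_range] at hm
          rw [Finset.mem_Ico] at hm2
          omega))

include h0 in
lemma count_main {Q : F[X]} (hQ : Q.Monic) (hk : 1 ≤ Q.natDegree) (M : ℕ) :
    ((Finset.range M).filter
      fun m => Q ∣ deltaInv a M - deltaInv a m).card
      = M / Fintype.card F ^ Q.natDegree := by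
  have hqk : 0 < Fintype.card F ^ Q.natDegree := pow_pos Fintype.card_pos _
  have hdm := Nat.div_add_mod M (Fintype.card F ^ Q.natDegree)
  have hmlt := Nat.mod_lt M hqk
  have hCle : M / Fintype.card F ^ Q.natDegree * Fintype.card F ^ Q.natDegree ≤ M :=
    Nat.div_mul_le_self M _
  have hdm' : M / Fintype.card F ^ Q.natDegree * Fintype.card F ^ Q.natDegree
      + M % Fintype.card F ^ Q.natDegree = M := by rw [mul_comm]; exact hdm
  have hMlt : M < (M / Fintype.card F ^ Q.natDegree + 1) * Fintype.card F ^ Q.natDegree := by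
    have hx : (M / Fintype.card F ^ Q.natDegree + 1) * Fintype.card F ^ Q.natDegree
        = M / Fintype.card F ^ Q.natDegree * Fintype.card F ^ Q.natDegree
          + Fintype.card F ^ Q.natDegree := by ring
    omega
  have hsplit : Finset.range M
      = Finset.range (M / Fintype.card F ^ Q.natDegree * Fintype.card F ^ Q.natDegree)
        ∪ Finset.Ico (M / Fintype.card F ^ Q.natDegree * Fintype.card F ^ Q.natDegree) M := by
    rw [Finset.range_eq_Ico, Finset.range_eq_Ico, Finset.Ico_union_Ico_eq_Ico (Nat.zero_le _) hCle]
  rw [hsplit, Finset.filter_union, Finset.card_union_of_disjoint,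
    count_blocks a h0 hQ hk]
  · have hempty : (Finset.Ico (M / Fintype.card F ^ Q.natDegree * Fintype.card F ^ Q.natDegree)
        M).filter (fun m => Q ∣ deltaInv a M - deltaInv a m) = ∅ := by
      rw [Finset.filter_eq_empty_iff]
      intro m hm
      rw [Finset.mem_Ico] at hm
      intro hdvd
      obtain ⟨m₀, hm₀, huniq⟩ := block_exists_unique a h0 hQ hk (deltaInv a M)
        (M / Fintype.card F ^ Q.natDegree)
      have e1 := huniq m ⟨Finset.mem_Ico.mpr ⟨hm.1, lt_of_lt_of_le hm.2 (le_of_lt hMlt)⟩, hdvd⟩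
      have e2 := huniq M ⟨Finset.mem_Ico.mpr ⟨hCle, hMlt⟩, by simp⟩
      omega
    rw [hempty]
    simp
  · exact Finset.disjoint_filter_filter (Finset.disjoint_left.mpr
      (fun m hm hm2 => by
        rw [Finset.mem_range] at hm
        rw [Finset.mem_Ico] at hm2
        omega))

end Counting
section Valuation

open UniqueFactorizationMonoid

open scoped Classical

noncomputable def W (q d M : ℕ) : ℕ := ∑ e ∈ Finset.Icc 1 M, M / q ^ (e * d)

lemma W_mono (q d : ℕ) {M M' : ℕ} (h : M ≤ M') : W q d M ≤ W q d M' := by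
  calc W q d M ≤ ∑ e ∈ Finset.Icc 1 M, M' / q ^ (e * d) :=
        Finset.sum_le_sum (fun e _ => Nat.div_le_div_right h)
  _ ≤ W q d M' := Finset.sum_le_sum_of_subset (Finset.Icc_subset_Icc_right h)

lemma W_pred_eq {q d M : ℕ} (hq : 2 ≤ q) (hd : 1 ≤ d) (hM : 1 ≤ M)
    (hndvd : ¬ q ^ d ∣ M) : W q d M = W q d (M - 1) := by
  have hM' : M = (M - 1) + 1 := by omega
  rw [W, W, hM', Finset.sum_Icc_succ_top (by omega : 1 ≤ M - 1 + 1), ← hM']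
  have htop : M / q ^ (M * d) = 0 := by
    apply Nat.div_eq_of_lt
    calc M < 2 ^ M := Nat.lt_two_pow_self
    _ ≤ q ^ (M * d) := Nat.pow_le_pow_left hq M |>.trans
        (Nat.pow_le_pow_right (by omega) (by nlinarith))
  rw [htop, add_zero]
  apply Finset.sum_congr rfl
  intro e he
  rw [Finset.mem_Icc] at he
  have hed : ¬ q ^ (e * d) ∣ M := by
    intro hdvd
    exact hndvd (dvd_trans (pow_dvd_pow q (by nlinarith : d ≤ e * d)) hdvd)
  conv_lhs => rw [hM']
  rw [Nat.succ_div, if_neg (by rw [← hM']; exact hed), add_zero]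

lemma W_ge_self {q d v D : ℕ} (hq : 2 ≤ q) (hd : 1 ≤ d) (hvd : v * d ≤ D) :
    v ≤ W q d (q ^ D) := by
  have hvD : v ≤ D := by nlinarith
  have hvq : v ≤ q ^ D :=
    le_of_lt (lt_of_le_of_lt hvD (lt_of_lt_of_le Nat.lt_two_pow_self
      (Nat.pow_le_pow_left hq D)))
  calc v = ∑ _e ∈ Finset.Icc 1 v, 1 := by simp
  _ ≤ ∑ e ∈ Finset.Icc 1 v, q ^ D / q ^ (e * d) := by
      apply Finset.sum_le_sum
      intro e he
      rw [Finset.mem_Icc] at he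
      exact (Nat.one_le_div_iff (pow_pos (by omega) _)).mpr
        (Nat.pow_le_pow_right (by omega) (by nlinarith))
  _ ≤ W q d (q ^ D) := Finset.sum_le_sum_of_subset (Finset.Icc_subset_Icc_right hvq)

variable (a : Fin (Fintype.card F) ≃ F) (h0 : a 0 = 0)

omit [Fintype F] in
lemma nu_pow_dvd_iff {P x : F[X]} (hP : Irreducible P) (hx : x ≠ 0) (e : ℕ) :
    P ^ e ∣ x ↔ e ≤ (normalizedFactors x).count (normalize P) := by
  rw [← Nat.cast_le (α := ℕ∞), ← emultiplicity_eq_count_normalizedFactors hP hx]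
  exact pow_dvd_iff_le_emultiplicity

omit [Fintype F] in
lemma nu_dvd_iff {g f : F[X]} (hg : g ≠ 0) (hf : f ≠ 0) :
    g ∣ f ↔ ∀ P ∈ normalizedFactors g,
      (normalizedFactors g).count P ≤ (normalizedFactors f).count P := by
  rw [dvd_iff_normalizedFactors_le_normalizedFactors hg hf, Multiset.le_iff_count]
  constructor
  · intro h P _; exact h P
  · intro h P
    by_cases hP : P ∈ normalizedFactors g
    · exact h P hP
    · simp [Multiset.count_eq_zero_of_notMem hP]

omit [Fintype F] in
lemma count_nf_prod {ι : Type*} (s : Finset ι) (f : ι → F[X]) (hf : ∀ i ∈ s, f i ≠ 0)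
    (P : F[X]) :
    (normalizedFactors (∏ i ∈ s, f i)).count P
      = ∑ i ∈ s, (normalizedFactors (f i)).count P := by
  induction s using Finset.induction_on with
  | empty => simp [normalizedFactors_one]
  | insert i s hnotmem ih =>
    rw [Finset.prod_insert hnotmem, Finset.sum_insert hnotmem,
      normalizedFactors_mul (hf i (Finset.mem_insert_self i s))
        (Finset.prod_ne_zero_iff.mpr (fun j hj => hf j (Finset.mem_insert_of_mem hj))),
      Multiset.count_add, ih (fun j hj => hf j (Finset.mem_insert_of_mem hj))]

omit [Fintype F] in
lemma count_eq_sum_ite {P x : F[X]} (hP : Irreducible P) (hPn : normalize P = P)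
    (hx : x ≠ 0) {B : ℕ} (hB : (normalizedFactors x).count P ≤ B) :
    (normalizedFactors x).count P = ∑ e ∈ Finset.Icc 1 B, if P ^ e ∣ x then 1 else 0 := by
  rw [Finset.sum_boole]
  have hfilter : (Finset.Icc 1 B).filter (fun e => P ^ e ∣ x)
      = Finset.Icc 1 ((normalizedFactors x).count P) := by
    ext e
    simp only [Finset.mem_filter, Finset.mem_Icc]
    rw [nu_pow_dvd_iff hP hx, hPn]
    constructor
    · rintro ⟨⟨h1, _⟩, h2⟩; exact ⟨h1, h2⟩
    · rintro ⟨h1, h2⟩; exact ⟨⟨h1, le_trans h2 hB⟩, h2⟩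
  rw [hfilter]
  simp [Nat.card_Icc]

include h0 in
lemma pfact_deltaInv_eq (M : ℕ) :
    pfact a (deltaInv a M) = ∏ m ∈ Finset.range M, (deltaInv a M - deltaInv a m) := by
  rw [pfact, delta_deltaInv a h0]

include h0 in
lemma pfact_factor_ne_zero {M m : ℕ} (hm : m < M) :
    deltaInv a M - deltaInv a m ≠ 0 :=
  sub_ne_zero.mpr (fun h => (Nat.ne_of_gt hm) (deltaInv_injective a h0 h))

include h0 in
lemma pfact_deltaInv_ne_zero (M : ℕ) : pfact a (deltaInv a M) ≠ 0 := by
  rw [pfact_deltaInv_eq a h0 M]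
  exact Finset.prod_ne_zero_iff.mpr
    (fun m hm => pfact_factor_ne_zero a h0 (Finset.mem_range.mp hm))

include h0 in
theorem nu_pfact {P : F[X]} (hP : Irreducible P) (hPn : normalize P = P) (M : ℕ) :
    (normalizedFactors (pfact a (deltaInv a M))).count P
      = W (Fintype.card F) P.natDegree M := by
  have hq := two_le_q (F := F)
  have hdP : 1 ≤ P.natDegree := hP.natDegree_pos
  have hPm : P.Monic := by
    have := monic_normalize (p := P) hP.ne_zero
    rwa [hPn] at this
  rw [pfact_deltaInv_eq a h0 M,
    count_nf_prod _ _ (fun m hm => pfact_factor_ne_zero a h0 (Finset.mem_range.mp hm)) P]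
  have hterm : ∀ m ∈ Finset.range M,
      (normalizedFactors (deltaInv a M - deltaInv a m)).count P
        = ∑ e ∈ Finset.Icc 1 M, if P ^ e ∣ (deltaInv a M - deltaInv a m) then 1 else 0 := by
    intro m hm
    rw [Finset.mem_range] at hm
    set x := deltaInv a M - deltaInv a m with hx
    have hx0 : x ≠ 0 := pfact_factor_ne_zero a h0 hm
    apply count_eq_sum_ite hP hPn hx0
    -- bound : count ≤ M
    have hdvd : P ^ ((normalizedFactors x).count P) ∣ x := by
      rw [nu_pow_dvd_iff hP hx0, hPn]
    have hdeg := natDegree_le_of_dvd hdvd hx0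
    rw [natDegree_pow] at hdeg
    have hxdeg : x.natDegree ≤ M := by
      have hb1 : (deltaInv a M).natDegree < M + 1 :=
        natDegree_deltaInv_lt a h0 (by omega) (lt_q_pow_self M)
      have hb2 : (deltaInv a m).natDegree < M + 1 :=
        natDegree_deltaInv_lt a h0 (by omega)
          (lt_of_lt_of_le (lt_q_pow_self m) (Nat.pow_le_pow_right (by omega) (by omega)))
      calc x.natDegree ≤ max (deltaInv a M).natDegree (deltaInv a m).natDegree :=
            natDegree_sub_le _ _
      _ ≤ M := by omega
    nlinarith [hdeg, hxdeg, hdP]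
  rw [Finset.sum_congr rfl hterm, Finset.sum_comm]
  apply Finset.sum_congr rfl
  intro e he
  rw [Finset.mem_Icc] at he
  have hQm : (P ^ e).Monic := hPm.pow e
  have hQdeg : (P ^ e).natDegree = e * P.natDegree := natDegree_pow _ _
  have hQk : 1 ≤ (P ^ e).natDegree := by rw [hQdeg]; nlinarith [he.1, hdP]
  rw [Finset.sum_boole]
  have := count_main a h0 hQm hQk M
  rw [hQdeg] at this
  rw [this]
  exact Nat.cast_id _

end Valuation
section SAnalysis

open UniqueFactorizationMonoid

open scoped Classical

variable (a : Fin (Fintype.card F) ≃ F) (h0 : a 0 = 0) (h1 : a 1 = 1)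

lemma S_eq {g : F[X]} (hg : g ≠ 0) :
    S a g = deltaInv a (sInf {m : ℕ | g ∣ pfact a (deltaInv a m)}) := by
  rw [S, if_neg hg]

include h0 in
lemma mem_Sset_iff {g : F[X]} (hg : g ≠ 0) (M : ℕ) :
    g ∣ pfact a (deltaInv a M) ↔ ∀ P ∈ normalizedFactors g,
      (normalizedFactors g).count P ≤ W (Fintype.card F) P.natDegree M := by
  rw [nu_dvd_iff hg (pfact_deltaInv_ne_zero a h0 M)]
  constructor
  · intro h P hP
    have := h P hP
    rwa [nu_pfact a h0 (irreducible_of_normalized_factor P hP)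
      (normalize_normalized_factor P hP) M] at this
  · intro h P hP
    rw [nu_pfact a h0 (irreducible_of_normalized_factor P hP)
      (normalize_normalized_factor P hP) M]
    exact h P hP

include h0 in
lemma self_mem_Sset {g : F[X]} (hg : g ≠ 0) : g ∣ pfact a (deltaInv a (delta a g)) := by
  rw [deltaInv_delta a h0, pfact]
  have hd0 : delta a g ≠ 0 := fun h => hg ((delta_eq_zero_iff a h0).mp h)
  have h0mem : (0 : ℕ) ∈ Finset.range (delta a g) := Finset.mem_range.mpr (by omega)
  have := Finset.dvd_prod_of_mem (fun m => g - deltaInv a m) h0mem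
  simpa only [deltaInv_zero a h0, sub_zero] using this

include h0 in
lemma sInf_mem_Sset {g : F[X]} (hg : g ≠ 0) :
    g ∣ pfact a (deltaInv a (sInf {m : ℕ | g ∣ pfact a (deltaInv a m)})) :=
  Nat.sInf_mem (⟨delta a g, self_mem_Sset a h0 hg⟩ :
    Set.Nonempty {m : ℕ | g ∣ pfact a (deltaInv a m)})

include h0 in
lemma sInf_le_delta {g : F[X]} (hg : g ≠ 0) :
    sInf {m : ℕ | g ∣ pfact a (deltaInv a m)} ≤ delta a g :=
  Nat.sInf_le (self_mem_Sset a h0 hg)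

include h0 in
lemma S_fixed_iff {g : F[X]} (hg : g ≠ 0) :
    S a g = g ↔ sInf {m : ℕ | g ∣ pfact a (deltaInv a m)} = delta a g := by
  rw [S_eq a hg]
  constructor
  · intro h
    have : deltaInv a (sInf {m : ℕ | g ∣ pfact a (deltaInv a m)})
        = deltaInv a (delta a g) := by rw [deltaInv_delta a h0, h]
    exact deltaInv_injective a h0 this
  · intro h
    rw [h, deltaInv_delta a h0]

include h0 in
lemma sInf_pos {g : F[X]} (hg : g ≠ 0) (hdeg : 1 ≤ g.natDegree) :
    0 < sInf {m : ℕ | g ∣ pfact a (deltaInv a m)} := by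
  rcases Nat.eq_zero_or_pos (sInf {m : ℕ | g ∣ pfact a (deltaInv a m)}) with h | h
  case inr => exact h
  · exfalso
    have hmem : g ∣ pfact a (deltaInv a 0) := h ▸ sInf_mem_Sset a h0 hg
    rw [deltaInv_zero a h0, pfact, (delta_eq_zero_iff a h0).mpr rfl] at hmem
    simp only [Finset.range_zero, Finset.prod_empty] at hmem
    have := natDegree_eq_zero_of_isUnit (isUnit_of_dvd_one hmem)
    omega

include h0 in
lemma q_dvd_sInf {g : F[X]} (hg : g ≠ 0) (hdeg : 1 ≤ g.natDegree) :
    Fintype.card F ∣ sInf {m : ℕ | g ∣ pfact a (deltaInv a m)} := by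
  have hq := two_le_q (F := F)
  set T := sInf {m : ℕ | g ∣ pfact a (deltaInv a m)} with hT
  have hTpos : 0 < T := sInf_pos a h0 hg hdeg
  have hTmem : g ∣ pfact a (deltaInv a T) := sInf_mem_Sset a h0 hg
  have hTpred : ¬ g ∣ pfact a (deltaInv a (T - 1)) := by
    have hlt : T - 1 < sInf {m : ℕ | g ∣ pfact a (deltaInv a m)} := by omega
    exact Nat.notMem_of_lt_sInf hlt
  rw [mem_Sset_iff a h0 hg] at hTmem
  rw [mem_Sset_iff a h0 hg] at hTpred
  push_neg at hTpred
  obtain ⟨P, hP, hPlt⟩ := hTpred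
  have hdP : 1 ≤ P.natDegree := (irreducible_of_normalized_factor P hP).natDegree_pos
  by_contra hndvd
  have hndvd' : ¬ Fintype.card F ^ P.natDegree ∣ T := fun h =>
    hndvd (dvd_trans (dvd_pow_self _ (by omega : P.natDegree ≠ 0)) h)
  have := W_pred_eq hq hdP hTpos hndvd'
  have h2 := hTmem P hP
  omega

include h0 in
lemma X_dvd_S {g : F[X]} (hg : g ≠ 0) (hdeg : 1 ≤ g.natDegree) : X ∣ S a g := by
  rw [S_eq a hg, X_dvd_iff, coeff_deltaInv a h0]
  have hdvd := q_dvd_sInf a h0 hg hdeg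
  have hd : sInf {m : ℕ | g ∣ pfact a (deltaInv a m)} / Fintype.card F ^ 0 % Fintype.card F
      = 0 := by
    rw [pow_zero, Nat.div_one]
    omega
  rw [a_mk_congr a hd, fin_mk_zero Fintype.card_pos, h0]

include h0 in
lemma sInf_le_q_pow {g : F[X]} (hg : g ≠ 0) :
    sInf {m : ℕ | g ∣ pfact a (deltaInv a m)} ≤ Fintype.card F ^ g.natDegree := by
  have hq := two_le_q (F := F)
  apply Nat.sInf_le
  rw [Set.mem_setOf_eq, mem_Sset_iff a h0 hg]
  intro P hP
  have hirr := irreducible_of_normalized_factor P hP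
  have hnorm := normalize_normalized_factor P hP
  have hdP : 1 ≤ P.natDegree := hirr.natDegree_pos
  apply W_ge_self hq hdP
  have hdvd : P ^ ((normalizedFactors g).count P) ∣ g := by
    rw [nu_pow_dvd_iff hirr hg, hnorm]
  have := natDegree_le_of_dvd hdvd hg
  rwa [natDegree_pow] at this

end SAnalysis
section Endgame

open UniqueFactorizationMonoid

open scoped Classical

lemma add_le_mul_two_pow {e s : ℕ} (he : 1 ≤ e) : e + s ≤ e * 2 ^ s := by
  induction s with
  | zero => simp
  | succ s ih =>
    have h1 : 0 < e * 2 ^ s := Nat.mul_pos (by omega) (pow_pos (by omega) s)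
    calc e + (s + 1) ≤ e * 2 ^ s + e * 2 ^ s := by omega
    _ = e * 2 ^ (s + 1) := by ring

lemma div_pred_pow {q e D : ℕ} (hq : 2 ≤ q) (heD : e ≤ D) :
    (q ^ D - 1) / q ^ e = q ^ (D - e) - 1 := by
  have hAB : q ^ (D - e) * q ^ e = q ^ D := by
    rw [← pow_add]
    congr 1
    omega
  have hA : 1 ≤ q ^ (D - e) := Nat.one_le_pow _ _ (by omega)
  have hB : 1 ≤ q ^ e := Nat.one_le_pow _ _ (by omega)
  apply le_antisymm
  · have hlt : (q ^ D - 1) / q ^ e < q ^ (D - e) := by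
      rw [Nat.div_lt_iff_lt_mul (by omega)]
      calc q ^ D - 1 < q ^ D := by
            have : 1 ≤ q ^ D := Nat.one_le_pow _ _ (by omega)
            omega
      _ = q ^ (D - e) * q ^ e := hAB.symm
    omega
  · rw [Nat.le_div_iff_mul_le (by omega : 0 < q ^ e), Nat.sub_mul, one_mul, hAB]
    omega

lemma W_first_term {q d M : ℕ} (hM : 1 ≤ M) : M / q ^ d ≤ W q d M := by
  have h1 : (1 : ℕ) ∈ Finset.Icc 1 M := Finset.mem_Icc.mpr ⟨le_refl _, hM⟩
  have := Finset.single_le_sum (f := fun e => M / q ^ (e * d))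
    (fun i _ => Nat.zero_le _) h1
  simpa [W] using this

variable (a : Fin (Fintype.card F) ≃ F) (h0 : a 0 = 0) (h1 : a 1 = 1)

omit [Fintype F] in
lemma normalize_X_eq : normalize (X : F[X]) = X := (monic_X).normalize_eq_self

include h0 in
lemma W1_bound {g : F[X]} (hg : g ≠ 0) (hX : X ∣ g) {P : F[X]}
    (hP : P ∈ normalizedFactors g)
    (hlt : W (Fintype.card F) P.natDegree (Fintype.card F ^ g.natDegree - 1)
      < (normalizedFactors g).count P) :
    W (Fintype.card F) 1 (Fintype.card F ^ g.natDegree - 1) ≤ g.natDegree - 1 := by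
  have hq := two_le_q (F := F)
  set q := Fintype.card F
  set D := g.natDegree with hD
  set e := P.natDegree with he
  set v := (normalizedFactors g).count P with hv
  have hirr := irreducible_of_normalized_factor P hP
  have hnorm := normalize_normalized_factor P hP
  have hdP : 1 ≤ e := hirr.natDegree_pos
  have hD1 : 1 ≤ D := by
    have := natDegree_le_of_dvd hX hg
    rw [natDegree_X] at this
    omega
  have hv1 : 1 ≤ v := by omega
  have hPdvd : P ^ v ∣ g := by rw [nu_pow_dvd_iff hirr hg, hnorm]
  have hve : v * e ≤ D := by
    have := natDegree_le_of_dvd hPdvd hg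
    rwa [natDegree_pow] at this
  rcases eq_or_lt_of_le hdP with he1 | he2
  · -- e = 1
    rw [← he1] at hlt hve
    rw [mul_one] at hve
    omega
  · -- e ≥ 2 : contradiction
    exfalso
    have hPX : P ≠ X := by
      intro hcon
      rw [hcon, natDegree_X] at he
      omega
    have hvX : 1 ≤ (normalizedFactors g).count X := by
      have : (X : F[X]) ^ 1 ∣ g := by rwa [pow_one]
      rw [nu_pow_dvd_iff irreducible_X hg, normalize_X_eq] at this
      exact this
    have hXP0 : (X : F[X]) * P ^ v ≠ 0 :=
      mul_ne_zero X_ne_zero (pow_ne_zero v hirr.ne_zero)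
    have hnf : normalizedFactors ((X : F[X]) * P ^ v)
        = {X} + v • {P} := by
      rw [normalizedFactors_mul X_ne_zero (pow_ne_zero v hirr.ne_zero),
        normalizedFactors_irreducible irreducible_X, normalize_X_eq,
        normalizedFactors_pow, normalizedFactors_irreducible hirr, hnorm]
    have hdvd : (X : F[X]) * P ^ v ∣ g := by
      rw [nu_dvd_iff hXP0 hg]
      intro Q hQ
      rw [hnf, Multiset.count_add, Multiset.count_nsmul,
        Multiset.count_singleton, Multiset.count_singleton]
      rcases eq_or_ne Q X with rfl | hQX
      · rw [if_pos rfl, if_neg (by exact hPX.symm)]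
        omega
      · rcases eq_or_ne Q P with rfl | hQP
        · rw [if_neg hQX, if_pos rfl]
          omega
        · rw [if_neg hQX, if_neg hQP]
          omega
    have hdegsum : 1 + v * e ≤ D := by
      have := natDegree_le_of_dvd hdvd hg
      rwa [natDegree_mul X_ne_zero (pow_ne_zero v hirr.ne_zero), natDegree_X,
        natDegree_pow] at this
    have heD : e ≤ D := by nlinarith
    have hq1 : 1 ≤ q ^ D - 1 := by
      have : 2 ≤ q ^ D := by
        calc 2 ≤ q := hq
        _ = q ^ 1 := (pow_one q).symm
        _ ≤ q ^ D := Nat.pow_le_pow_right (by omega) hD1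
      omega
    have hfirst : (q ^ D - 1) / q ^ e ≤ W q e (q ^ D - 1) := W_first_term hq1
    have hdiv : (q ^ D - 1) / q ^ e = q ^ (D - e) - 1 := div_pred_pow hq heD
    have hvge : q ^ (D - e) ≤ v := by
      have h2 : 1 ≤ q ^ (D - e) := Nat.one_le_pow _ _ (by omega)
      omega
    have h2pow : 2 ^ (D - e) ≤ q ^ (D - e) := Nat.pow_le_pow_left hq _
    have hbig : D ≤ e * 2 ^ (D - e) := by
      have := add_le_mul_two_pow (s := D - e) hdP
      omega
    nlinarith

include h0 h1 in
lemma Xpow_fixed {D : ℕ} (hD : 1 ≤ D)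
    (hW : W (Fintype.card F) 1 (Fintype.card F ^ D - 1) ≤ D - 1) :
    S a ((X : F[X]) ^ D) = X ^ D := by
  have hq := two_le_q (F := F)
  have hXD0 : (X : F[X]) ^ D ≠ 0 := pow_ne_zero D X_ne_zero
  rw [S_fixed_iff a h0 hXD0, delta_X_pow a h0 h1 D]
  have hle : sInf {m : ℕ | (X : F[X]) ^ D ∣ pfact a (deltaInv a m)} ≤ Fintype.card F ^ D := by
    have := sInf_le_delta a h0 hXD0
    rwa [delta_X_pow a h0 h1 D] at this
  rcases eq_or_lt_of_le hle with heq | hlt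
  · exact heq
  · exfalso
    have hmem := sInf_mem_Sset a h0 hXD0
    rw [mem_Sset_iff a h0 hXD0] at hmem
    have hnf : normalizedFactors ((X : F[X]) ^ D) = D • {X} := by
      rw [normalizedFactors_pow, normalizedFactors_irreducible irreducible_X,
        normalize_X_eq]
    have hcount : (normalizedFactors ((X : F[X]) ^ D)).count X = D := by
      rw [hnf, Multiset.count_nsmul, Multiset.count_singleton, if_pos rfl]
      omega
    have hXmem : (X : F[X]) ∈ normalizedFactors ((X : F[X]) ^ D) := by
      rw [← Multiset.count_pos, hcount]
      omega
    have := hmem X hXmem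
    rw [hcount, natDegree_X] at this
    have hmono : W (Fintype.card F) 1
        (sInf {m : ℕ | (X : F[X]) ^ D ∣ pfact a (deltaInv a m)})
        ≤ W (Fintype.card F) 1 (Fintype.card F ^ D - 1) :=
      W_mono _ _ (by omega)
    omega

include h0 h1 in
lemma main_aux (N : ℕ) : ∀ g : F[X], g ≠ 0 → X ∣ g → delta a g ≤ N →
    ∃ n, n ≤ g.natDegree ∧ S a ((S a)^[n] g) = (S a)^[n] g := by
  have hq := two_le_q (F := F)
  induction N using Nat.strong_induction_on with
  | _ N IH =>
  intro g hg hX hdel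
  by_cases hfix : S a g = g
  · exact ⟨0, Nat.zero_le _, by simpa using hfix⟩
  · have hD : 1 ≤ g.natDegree := by
      have := natDegree_le_of_dvd hX hg
      rw [natDegree_X] at this
      omega
    set T := sInf {m : ℕ | g ∣ pfact a (deltaInv a m)} with hT
    have hTpos : 0 < T := sInf_pos a h0 hg hD
    have hTle : T ≤ delta a g := sInf_le_delta a h0 hg
    have hTne : T ≠ delta a g := fun h => hfix ((S_fixed_iff a h0 hg).mpr h)
    have hSg : S a g = deltaInv a T := S_eq a hg
    have hg'0 : S a g ≠ 0 := by
      rw [hSg]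
      exact deltaInv_ne_zero a h0 (by omega)
    have hXg' : X ∣ S a g := X_dvd_S a h0 hg hD
    have hdeltag' : delta a (S a g) = T := by rw [hSg, delta_deltaInv a h0]
    have hg'N : delta a (S a g) < N := by omega
    have hpowle : Fintype.card F ^ (S a g).natDegree ≤ T := by
      rw [hSg]
      exact pow_natDegree_deltaInv_le a h0 (by omega)
    have hTlepow : T ≤ Fintype.card F ^ g.natDegree := sInf_le_q_pow a h0 hg
    have hdegle : (S a g).natDegree ≤ g.natDegree := by
      have := le_trans hpowle hTlepow
      exact (Nat.pow_le_pow_iff_right (by omega)).mp this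
    rcases lt_or_eq_of_le hdegle with hlt | heq
    · obtain ⟨n, hn, hfix'⟩ := IH (delta a (S a g)) hg'N (S a g) hg'0 hXg' le_rfl
      refine ⟨n + 1, by omega, ?_⟩
      rwa [Function.iterate_succ_apply]
    · -- degrees equal : S a g = X ^ D and it is fixed
      have hTeq : T = Fintype.card F ^ g.natDegree := by
        rw [← heq] at hTlepow ⊢
        omega
      have hgX : S a g = X ^ g.natDegree := by
        rw [hSg, hTeq, ← heq, heq, deltaInv_q_pow a h0 h1]
      have hpred : ¬ g ∣ pfact a (deltaInv a (T - 1)) := by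
        have hlt' : T - 1 < sInf {m : ℕ | g ∣ pfact a (deltaInv a m)} := by omega
        exact Nat.notMem_of_lt_sInf hlt'
      rw [mem_Sset_iff a h0 hg] at hpred
      push_neg at hpred
      obtain ⟨P, hP, hPlt⟩ := hpred
      rw [hTeq] at hPlt
      have hW1 := W1_bound a h0 hg hX hP hPlt
      have hfixX := Xpow_fixed a h0 h1 hD hW1
      refine ⟨1, hD, ?_⟩
      rw [Function.iterate_one, hgX]
      exact hfixX

end Endgame

/-- Proposition 3.11: for any `f` with `deg f ≥ 1` there is a positive integer
`n ≤ 1 + deg f` such that the `n`-th iterate `S^{(n)}(f)` is a fixed point of `S`. -/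
theorem smarandache_iterate_fixed (a : Fin (Fintype.card F) ≃ F) (h0 : a 0 = 0)
    (h1 : a 1 = 1) (f : F[X]) (hdeg : 1 ≤ f.natDegree) :
    ∃ n : ℕ, 0 < n ∧ n ≤ 1 + f.natDegree ∧ S a ((S a)^[n] f) = (S a)^[n] f := by
  have hq := two_le_q (F := F)
  have hf0 : f ≠ 0 := fun h => by simp [h] at hdeg
  by_cases hfix : S a f = f
  · exact ⟨1, by omega, by omega, by simpa [hfix] using hfix⟩
  · set T := sInf {m : ℕ | f ∣ pfact a (deltaInv a m)} with hT
    have hTpos : 0 < T := sInf_pos a h0 hf0 hdeg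
    have hSf : S a f = deltaInv a T := S_eq a hf0
    have hg0 : S a f ≠ 0 := by
      rw [hSf]
      exact deltaInv_ne_zero a h0 (by omega)
    have hXg : X ∣ S a f := X_dvd_S a h0 hf0 hdeg
    have hTleD : T ≤ delta a f := sInf_le_delta a h0 hf0
    have hpowle : Fintype.card F ^ (S a f).natDegree ≤ T := by
      rw [hSf]
      exact pow_natDegree_deltaInv_le a h0 (by omega)
    have hdegle : (S a f).natDegree ≤ f.natDegree := by
      have hlt : Fintype.card F ^ (S a f).natDegree
          < Fintype.card F ^ (f.natDegree + 1) := by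
        calc Fintype.card F ^ (S a f).natDegree ≤ T := hpowle
        _ ≤ delta a f := hTleD
        _ < Fintype.card F ^ (f.natDegree + 1) := delta_lt_pow a f
      have := (Nat.pow_lt_pow_iff_right (by omega : 1 < Fintype.card F)).mp hlt
      omega
    obtain ⟨n, hn, hfix'⟩ := main_aux a h0 h1 (delta a (S a f)) (S a f) hg0 hXg le_rfl
    refine ⟨n + 1, by omega, by omega, ?_⟩
    rwa [Function.iterate_succ_apply]
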